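/- arXiv:2512.20791 — 6 statements merged into one kernel-verified Lean document; each statement's English description precedes it below -/
import Mathlib

section
/- Let C ⊆ dom(g) be a nonempty compact convex set and let F : Z → Z be monotone and Lipschitz continuous. If x ∈ C satisfies Θ(x | F,g,C) = 0 and there exists ε > 0 such that B(x,ε) ∩ C = B(x,ε) ∩ dom(g) (where B(x,ε) is the closed ball of radius ε around x), then x is a solution of HVI(F,g). -/
/-!
A zero gap on `C` is the Minty inequality `H(x, y) ≤ 0` for all `y ∈ C`. Testing it at the
points `x + t (y - x)` of `C`, using convexity of `g`, dividing by `t` and letting `t → 0⁺`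
(continuity of `F`) gives the Stampacchia inequality `H(y, x) ≥ 0` on `C`. Since `C` agrees
with `dom g` near `x`, `x` is then a local, hence global, minimizer over `dom g` of the convex
function `u ↦ ⟪F x, u - x⟫ + g u`; outside `dom g` the inequality is trivial.
-/

noncomputable section

open scoped RealInnerProductSpace
open Filter Topology

variable {Z : Type*} [NormedAddCommGroup Z] [InnerProductSpace ℝ Z] [CompleteSpace Z]

/-- Effective domain of an extended-real-valued function. -/
def edom {Z : Type*} (g : Z → EReal) : Set Z := {z | g z < ⊤}

/-- `g` is proper, convex and lower semicontinuous. -/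
structure ProperConvexLsc (g : Z → EReal) : Prop where
  ne_bot : ∀ z, g z ≠ ⊥
  proper : ∃ z, g z < ⊤
  convex : ∀ x y : Z, ∀ a b : ℝ, 0 ≤ a → 0 ≤ b → a + b = 1 →
    g (a • x + b • y) ≤ (a : EReal) * g x + (b : EReal) * g y
  lsc : LowerSemicontinuous g

/-- Monotonicity of an operator on a real Hilbert space. -/
def IsMonotoneOp (F : Z → Z) : Prop := ∀ x y : Z, 0 ≤ ⟪F x - F y, x - y⟫

/-- Lipschitz continuity with (real) constant `L`. -/
def IsLipOp (L : ℝ) (F : Z → Z) : Prop := ∀ x y : Z, ‖F x - F y‖ ≤ L * ‖x - y‖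

/-- The bifunction `H^{(F,g)}(z,y) = ⟪F y, z - y⟫ + g z - g y`. -/
def Hb (F : Z → Z) (g : Z → EReal) (z y : Z) : EReal :=
  ((⟪F y, z - y⟫ : ℝ) : EReal) + g z - g y

/-- The localized dual gap function `Θ(z | F,g,C)`. -/
def gapFn (F : Z → Z) (g : Z → EReal) (C : Set Z) (z : Z) : EReal :=
  ⨆ y ∈ C, Hb F g z y

/-- The convex subdifferential of an extended-real-valued function. -/
def subdiff (g : Z → EReal) (x : Z) : Set Z :=
  {ξ : Z | ∀ y : Z, ((⟪ξ, y - x⟫ : ℝ) : EReal) + g x ≤ g y}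

/-- The solution set `zer(F + ∂g)`. -/
def zerFg (F : Z → Z) (g : Z → EReal) : Set Z := {z : Z | -F z ∈ subdiff g z}

/-- The normal cone to a set `C` at `z`. -/
def normalCone (C : Set Z) (z : Z) : Set Z :=
  {ξ : Z | z ∈ C ∧ ∀ z' ∈ C, ⟪ξ, z' - z⟫ ≤ 0}

/-- The solution set `zer(F + ∂g + N_C)`. -/
def zerFgN (F : Z → Z) (g : Z → EReal) (C : Set Z) : Set Z :=
  {z : Z | ∃ ξ ∈ subdiff g z, ∃ p ∈ normalCone C z, F z + ξ + p = 0}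

/-- The solution set `S₁` of problem (P): points of `S₂` solving the upper HVI over `S₂`. -/
def solP (F₁ : Z → Z) (g₁ : Z → EReal) (S₂ : Set Z) : Set Z :=
  {zs : Z | zs ∈ S₂ ∧ ∀ u ∈ S₂, 0 ≤ Hb F₁ g₁ u zs}

/-- `(α,ρ)`-weak sharpness of the solution set `S` of `HVI(F,g)`. -/
def WeakSharp (F : Z → Z) (g : Z → EReal) (S : Set Z) (α ρ : ℝ) : Prop :=
  ∀ zs ∈ S, ∀ z ∈ edom g,
    (((α / ρ) * Metric.infDist z S ^ ρ : ℝ) : EReal) ≤ Hb F g z zs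

/-- Support function of a set. -/
def suppFn (p : Z) (C : Set Z) : EReal := ⨆ z ∈ C, ((⟪p, z⟫ : ℝ) : EReal)

/-- The Fitzpatrick-type function `φ^{(F,g)}(z,u)`. -/
def phiFn (F : Z → Z) (g : Z → EReal) (z u : Z) : EReal :=
  ⨆ y ∈ edom g, (Hb F g z y + ((⟪y, u⟫ : ℝ) : EReal))

/-- `x = prox_{τ G}(u)`, via the variational characterization
`⟪u - x, v - x⟫ ≤ τ (G v - G x)` for all `v`. -/
def IsProx (τ : ℝ) (G : Z → EReal) (u x : Z) : Prop :=
  ∀ v : Z, ((⟪u - x, v - x⟫ : ℝ) : EReal) ≤ (τ : EReal) * (G v - G x)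

/-- The Tikhonov-regularized operator `V_k = F₂ + σ_k F₁`. -/
def Vop (F₁ F₂ : Z → Z) (σ : ℕ → ℝ) (k : ℕ) (x : Z) : Z := F₂ x + σ k • F₁ x

/-- The Tikhonov-regularized function `G_k = g₂ + σ_k g₁`. -/
def Gfun (g₁ g₂ : Z → EReal) (σ : ℕ → ℝ) (k : ℕ) (v : Z) : EReal :=
  g₂ v + ((σ k : ℝ) : EReal) * g₁ v

/-- The Attouch–Czarnecki summability condition. -/
def ACcond (F₂ : Z → Z) (g₂ : Z → EReal) (S₂ : Set Z) (t σ : ℕ → ℝ) : Prop :=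
  ∀ p : Z, (∃ zs : Z, p ∈ normalCone S₂ zs) →
    ∃ M : ℝ, ∀ K : ℕ,
      (∑ k ∈ Finset.Icc 1 K,
        ((t k : ℝ) : EReal) * ((⨆ zs ∈ S₂, phiFn F₂ g₂ zs (σ k • p)) - suppFn (σ k • p) S₂))
        ≤ (M : EReal)

/-- `T_K = ∑_{k=1}^K t_k`. -/
def Tsum (t : ℕ → ℝ) (K : ℕ) : ℝ := ∑ k ∈ Finset.Icc 1 K, t k

/-- The ergodic average `z̄^K` (here `w k` plays the role of `z^{k+1/2}`). -/
def zbar (t : ℕ → ℝ) (w : ℕ → Z) (K : ℕ) : Z :=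
  (Tsum t K)⁻¹ • ∑ k ∈ Finset.Icc 1 K, t k • w k

/-- Weights `γ_k = 1/∏_{i=1}^k (1 - t_i σ_i μ)` (so `γ_0 = 1`). -/
def gammaW (t σ : ℕ → ℝ) (μ : ℝ) (k : ℕ) : ℝ :=
  (∏ i ∈ Finset.Icc 1 k, (1 - t i * σ i * μ))⁻¹

/-- The weighted ergodic average used in the strongly monotone case. -/
def zbarW (t σ : ℕ → ℝ) (μ : ℝ) (w : ℕ → Z) (K : ℕ) : Z :=
  (∑ i ∈ Finset.Icc 1 K, t i * σ i * gammaW t σ μ i)⁻¹ •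
    ∑ i ∈ Finset.Icc 1 K, (t i * σ i * gammaW t σ μ i) • w i

/-- Convex tangent cone `T_C(x) = cl(⋃_{λ>0} (C - x)/λ)`. -/
def tangentConeCvx (C : Set Z) (x : Z) : Set Z :=
  closure {v : Z | ∃ lam : ℝ, 0 < lam ∧ ∃ c ∈ C, v = lam⁻¹ • (c - x)}

/-- Polar cone of a set. -/
def polarCone (K : Set Z) : Set Z := {z : Z | ∀ x ∈ K, ⟪z, x⟫ ≤ 0}

section

variable {E : Type*} [NormedAddCommGroup E]

theorem IsLipOp.continuous {L : ℝ} {F : E → E} (hF : IsLipOp L F) : Continuous F :=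
  (LipschitzWith.of_dist_le' fun x y => by simpa only [dist_eq_norm] using hF x y).continuous

variable [InnerProductSpace ℝ E]

namespace ProperConvexLsc

variable {g : E → EReal}

theorem coe_toReal (hg : ProperConvexLsc g) {z : E} (hz : z ∈ edom g) :
    ((g z).toReal : EReal) = g z :=
  EReal.coe_toReal hz.ne (hg.ne_bot z)

theorem convexOn_toReal (hg : ProperConvexLsc g) :
    ConvexOn ℝ (edom g) fun z => (g z).toReal := by
  have hle : ∀ ⦃x⦄, x ∈ edom g → ∀ ⦃y⦄, y ∈ edom g → ∀ ⦃a b : ℝ⦄,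
      0 ≤ a → 0 ≤ b → a + b = 1 →
      g (a • x + b • y) ≤ ((a * (g x).toReal + b * (g y).toReal : ℝ) : EReal) := by
    intro x hx y hy a b ha hb hab
    rw [EReal.coe_add, EReal.coe_mul, EReal.coe_mul, hg.coe_toReal hx, hg.coe_toReal hy]
    exact hg.convex x y a b ha hb hab
  refine ⟨fun x hx y hy a b ha hb hab => (hle hx hy ha hb hab).trans_lt (EReal.coe_lt_top _),
    fun x hx y hy a b ha hb hab => ?_⟩
  exact EReal.toReal_le_toReal (hle hx hy ha hb hab) (hg.ne_bot _) (EReal.coe_ne_top _)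

theorem Hb_eq_coe (hg : ProperConvexLsc g) (F : E → E) {z y : E} (hz : z ∈ edom g)
    (hy : y ∈ edom g) :
    Hb F g z y = ((⟪F y, z - y⟫ + (g z).toReal - (g y).toReal : ℝ) : EReal) := by
  rw [Hb, ← hg.coe_toReal hz, ← hg.coe_toReal hy]
  norm_cast

theorem Hb_eq_top (hg : ProperConvexLsc g) (F : E → E) {z y : E} (hz : z ∉ edom g)
    (hy : y ∈ edom g) :
    Hb F g z y = ⊤ := by
  rw [Hb, (not_lt_top_iff.1 hz : g z = ⊤), ← hg.coe_toReal hy,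
    EReal.add_top_of_ne_bot (EReal.coe_ne_bot _), EReal.top_sub_coe]

end ProperConvexLsc

theorem stampacchia_of_minty {C : Set E} {F : E → E} {φ : E → ℝ} (hφ : ConvexOn ℝ C φ)
    (hF : Continuous F) {x : E} (hx : x ∈ C)
    (hminty : ∀ y ∈ C, ⟪F y, x - y⟫ + φ x - φ y ≤ 0) :
    ∀ y ∈ C, 0 ≤ ⟪F x, y - x⟫ + φ y - φ x := by
  intro y hy
  set f : ℝ → ℝ := fun t => ⟪F (x + t • (y - x)), y - x⟫ + φ y - φ x
  have hf : Continuous f := by fun_prop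
  have hf_nonneg : ∀ t ∈ Set.Ioc (0 : ℝ) 1, 0 ≤ f t := by
    rintro t ⟨ht0, ht1⟩
    have hw : x + t • (y - x) = (1 - t) • x + t • y := by module
    have hminty_w := hminty _ (hφ.1.add_smul_sub_mem hx hy ⟨ht0.le, ht1⟩)
    have hφ_w := hφ.2 hx hy (sub_nonneg.2 ht1) ht0.le (sub_add_cancel 1 t)
    rw [← hw, smul_eq_mul, smul_eq_mul] at hφ_w
    have hinner : ⟪F (x + t • (y - x)), x - (x + t • (y - x))⟫ =
        -t * ⟪F (x + t • (y - x)), y - x⟫ := by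
      rw [sub_add_cancel_left, ← neg_smul, real_inner_smul_right]
    -- `hminty_w` and `hφ_w` combine to `t * f t ≥ 0`
    nlinarith
  have hlim : Tendsto f (𝓝[>] 0) (𝓝 (f 0)) := hf.continuousAt.continuousWithinAt.tendsto
  have h0 : 0 ≤ f 0 :=
    ge_of_tendsto hlim <| eventually_of_mem (Ioc_mem_nhdsGT zero_lt_one) hf_nonneg
  simpa [f] using h0

theorem stampacchia_of_local_stampacchia {D : Set E} {φ : E → ℝ} (hφ : ConvexOn ℝ D φ)
    (v : E) {x : E} (hx : x ∈ D) {ε : ℝ} (hε : 0 < ε)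
    (hloc : ∀ y ∈ Metric.closedBall x ε ∩ D, 0 ≤ ⟪v, y - x⟫ + φ y - φ x) :
    ∀ y ∈ D, 0 ≤ ⟪v, y - x⟫ + φ y - φ x := by
  set ψ : E → ℝ := fun y => φ y + ⟪v, y⟫
  have hψ : ConvexOn ℝ D ψ :=
    hφ.add (((innerSL ℝ v : E →L[ℝ] ℝ) : E →ₗ[ℝ] ℝ).convexOn hφ.1)
  have hlocmin : IsLocalMinOn ψ D x := by
    refine eventually_of_mem (inter_mem_nhdsWithin D (Metric.closedBall_mem_nhds x hε)) ?_
    rintro y ⟨hyD, hyB⟩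
    have hy := hloc y ⟨hyB, hyD⟩
    simp only [ψ, inner_sub_right] at hy ⊢
    linarith
  intro y hy
  have hmin : ψ x ≤ ψ y := IsMinOn.of_isLocalMinOn_of_convexOn hx hlocmin hψ hy
  simp only [ψ] at hmin
  rw [inner_sub_right]
  linarith

end

theorem gap_zero_implies_solution_general
    (F : Z → Z) (g : Z → EReal) (L : ℝ)
    (hg : ProperConvexLsc g) (hFL : IsLipOp L F)
    (C : Set Z) (hCcv : Convex ℝ C)
    (hCdom : C ⊆ edom g)
    (x : Z) (hx : x ∈ C) (hgap : gapFn F g C x = 0)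
    (hball : ∃ ε : ℝ, 0 < ε ∧
      Metric.closedBall x ε ∩ C = Metric.closedBall x ε ∩ edom g) :
    ∀ u : Z, 0 ≤ Hb F g u x := by
  obtain ⟨ε, hε, hball⟩ := hball
  have hφ := hg.convexOn_toReal
  have hminty : ∀ y ∈ C, ⟪F y, x - y⟫ + (g x).toReal - (g y).toReal ≤ 0 := fun y hy => by
    have h := le_iSup₂ (f := fun y (_ : y ∈ C) => Hb F g x y) y hy
    rw [← gapFn, hgap, hg.Hb_eq_coe F (hCdom hx) (hCdom hy)] at h
    exact_mod_cast h
  have hstamp := stampacchia_of_minty (hφ.subset hCdom hCcv) hFL.continuous hx hminty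
  have hglobal := stampacchia_of_local_stampacchia hφ (F x) (hCdom hx) hε fun y hy => by
    rw [← hball] at hy
    exact hstamp y hy.2
  intro u
  by_cases hu : u ∈ edom g
  · rw [hg.Hb_eq_coe F hu (hCdom hx)]
    exact_mod_cast hglobal u hu
  · rw [hg.Hb_eq_top F hu (hCdom hx)]
    exact le_top

/-- if `x ∈ C` has zero gap and `C` agrees with `dom(g)` near `x`,
then `x` solves `HVI(F,g)`. -/
theorem gap_zero_implies_solution
    (F : Z → Z) (g : Z → EReal) (L : ℝ)
    (hg : ProperConvexLsc g) (hF : IsMonotoneOp F) (hFL : IsLipOp L F)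
    (C : Set Z) (hCne : C.Nonempty) (hCcp : IsCompact C) (hCcv : Convex ℝ C)
    (hCdom : C ⊆ edom g)
    (x : Z) (hx : x ∈ C) (hgap : gapFn F g C x = 0)
    (hball : ∃ ε : ℝ, 0 < ε ∧
      Metric.closedBall x ε ∩ C = Metric.closedBall x ε ∩ edom g) :
    ∀ u : Z, 0 ≤ Hb F g u x :=
  gap_zero_implies_solution_general F g L hg hFL C hCcv hCdom x hx hgap hball

end
end

section
/- Under the data assumptions and constraint qualification of problem (P), let U₁ ⊆ dom(g₁) be a nonempty compact set with U₁ ∩ S₁ ≠ ∅. Then there exists a constant B_{U₁} > 0 such that Θ_Opt(z | U₁ ∩ S₁) ≥ −B_{U₁}·dist(z, S₂) for all z ∈ Z. -/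
noncomputable section

open scoped RealInnerProductSpace
open Filter Topology

variable {Z : Type*} [NormedAddCommGroup Z] [InnerProductSpace ℝ Z] [CompleteSpace Z]

/-- lower bound on the optimality gap (Lemma `lem:LB`, eq. (LB1)). -/
theorem optimality_gap_lower_bound
    (F₁ F₂ : Z → Z) (LF₁ LF₂ : ℝ) (g₁ g₂ : Z → EReal)
    (hF₁m : IsMonotoneOp F₁) (hF₂m : IsMonotoneOp F₂)
    (hF₁L : IsLipOp LF₁ F₁) (hF₂L : IsLipOp LF₂ F₂)
    (hg₁ : ProperConvexLsc g₁) (hg₂ : ProperConvexLsc g₂)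
    (hdom : (edom g₁ ∩ edom g₂).Nonempty)
    (hS₂ne : (zerFg F₂ g₂).Nonempty)
    (hCQ : solP F₁ g₁ (zerFg F₂ g₂) = zerFgN F₁ g₁ (zerFg F₂ g₂))
    (U₁ : Set Z) (hU₁dom : U₁ ⊆ edom g₁) (hU₁ne : U₁.Nonempty) (hU₁cp : IsCompact U₁)
    (hU₁S₁ : (U₁ ∩ solP F₁ g₁ (zerFg F₂ g₂)).Nonempty) :
    ∃ B : ℝ, 0 < B ∧ ∀ z : Z,
      ((-(B * Metric.infDist z (zerFg F₂ g₂)) : ℝ) : EReal) ≤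
        gapFn F₁ g₁ (U₁ ∩ solP F₁ g₁ (zerFg F₂ g₂)) z := by
  classical
  obtain ⟨ys, hysU, hysS⟩ := hU₁S₁
  have hysN : ys ∈ zerFgN F₁ g₁ (zerFg F₂ g₂) := by rw [← hCQ]; exact hysS
  obtain ⟨ξ, hξ, p, hp, heq⟩ := hysN
  set S₂ := zerFg F₂ g₂
  refine ⟨‖p‖ + 1, by positivity, fun z => ?_⟩
  -- reduce to bounding Hb at ys
  have hmem : ys ∈ U₁ ∩ solP F₁ g₁ S₂ := ⟨hysU, hysS⟩
  have hle : Hb F₁ g₁ z ys ≤ gapFn F₁ g₁ (U₁ ∩ solP F₁ g₁ S₂) z :=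
    le_iSup₂ (f := fun y _ => Hb F₁ g₁ z y) ys hmem
  refine le_trans ?_ hle
  -- g₁ ys is a real number
  have hbys : g₁ ys ≠ ⊥ := hg₁.ne_bot ys
  have htys : g₁ ys ≠ ⊤ := (hU₁dom hysU).ne
  set b : ℝ := (g₁ ys).toReal with hb
  have hbeq : g₁ ys = (b : EReal) := (EReal.coe_toReal htys hbys).symm
  by_cases htz : g₁ z = ⊤
  · have : Hb F₁ g₁ z ys = ⊤ := by
      rw [Hb, htz, hbeq]
      rw [EReal.add_top_of_ne_bot (by simp)]
      rfl
    rw [this]; exact le_top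
  · have hbz : g₁ z ≠ ⊥ := hg₁.ne_bot z
    set a : ℝ := (g₁ z).toReal with ha
    have haeq : g₁ z = (a : EReal) := (EReal.coe_toReal htz hbz).symm
    have hHb : Hb F₁ g₁ z ys = ((⟪F₁ ys, z - ys⟫ + a - b : ℝ) : EReal) := by
      rw [Hb, haeq, hbeq, ← EReal.coe_add, ← EReal.coe_sub]
    rw [hHb]
    rw [EReal.coe_le_coe_iff]
    -- subgradient inequality in ℝ
    have hsub : ⟪ξ, z - ys⟫ + b ≤ a := by
      have := hξ z
      rw [haeq, hbeq, ← EReal.coe_add, EReal.coe_le_coe_iff] at this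
      exact this
    -- F₁ ys = -ξ - p
    have hF : F₁ ys = -(ξ + p) :=
      eq_neg_of_add_eq_zero_left (by rw [← add_assoc]; exact heq)
    have hinner : ⟪F₁ ys, z - ys⟫ = -⟪ξ, z - ys⟫ - ⟪p, z - ys⟫ := by
      rw [hF]; rw [inner_neg_left, inner_add_left]; ring
    -- key: ⟪p, z - ys⟫ ≤ ‖p‖ * infDist z S₂
    have hkey : ⟪p, z - ys⟫ ≤ ‖p‖ * Metric.infDist z S₂ := by
      have hstep : ∀ zs ∈ S₂, ⟪p, z - ys⟫ ≤ ‖p‖ * dist z zs := by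
        intro zs hzs
        have h1 : ⟪p, zs - ys⟫ ≤ 0 := hp.2 zs hzs
        have h2 : ⟪p, z - zs⟫ ≤ ‖p‖ * ‖z - zs‖ := real_inner_le_norm p (z - zs)
        have h3 : ⟪p, z - ys⟫ = ⟪p, z - zs⟫ + ⟪p, zs - ys⟫ := by
          rw [← inner_add_right, sub_add_sub_cancel]
        rw [h3, dist_eq_norm]
        linarith
      rcases eq_or_ne p 0 with hp0 | hp0
      · simp [hp0]
      · have hnp : (0:ℝ) < ‖p‖ := norm_pos_iff.mpr hp0
        have : ⟪p, z - ys⟫ / ‖p‖ ≤ Metric.infDist z S₂ := by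
          by_contra hcon
          push_neg at hcon
          obtain ⟨zs, hzs, hdlt⟩ := (Metric.infDist_lt_iff hS₂ne).mp hcon
          have h1 := hstep zs hzs
          have h2 : ‖p‖ * dist z zs < ‖p‖ * (⟪p, z - ys⟫ / ‖p‖) :=
            mul_lt_mul_of_pos_left hdlt hnp
          rw [mul_div_cancel₀ _ hnp.ne'] at h2
          linarith
        calc ⟪p, z - ys⟫ = ‖p‖ * (⟪p, z - ys⟫ / ‖p‖) := by field_simp
          _ ≤ ‖p‖ * Metric.infDist z S₂ := by
              exact mul_le_mul_of_nonneg_left this hnp.le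
    have hd : 0 ≤ Metric.infDist z S₂ := Metric.infDist_nonneg
    nlinarith [hkey, hsub, hinner]


end
end

section
/- Suppose S₂ := zer(F₂+∂g₂) is nonempty and (α,ρ)-weakly sharp as solution set of HVI(F₂,g₂), with α > 0 and ρ > 1. Then for every z ∈ S₂, every p* ∈ Z with σ(p* | S₂) < ∞, and every σ > 0: φ^{(F₂,g₂)}(z, σp*) − σ(σp* | S₂) ≤ α^{−1/(ρ−1)}·((ρ−1)/ρ)·σ^{ρ/(ρ−1)}·‖p*‖^{ρ/(ρ−1)}. -/
/-!
At a solution `z`, monotonicity of `F₂` gives `H(z,y) ≤ -H(y,z)`, and weak sharpness bounds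
`H(y,z)` below by `(α/ρ) d^ρ` with `d = dist(y, S₂)`. Since `⟪·, σp⟫` is `σ‖p‖`-Lipschitz and
bounded by `σ(σp | S₂)` on `S₂`, also `⟪y, σp⟫ ≤ σ(σp | S₂) + σ‖p‖ d`. Hence every term of the supremum defining
`φ(z, σp) - σ(σp | S₂)` is at most `σ‖p‖ d - (α/ρ) d^ρ`, which Young's inequality with exponents
`ρ` and `ρ/(ρ-1)` bounds by the stated constant, uniformly in `d ≥ 0`.
-/

noncomputable section

open scoped RealInnerProductSpace
open Filter Topology

variable {Z : Type*} [NormedAddCommGroup Z] [InnerProductSpace ℝ Z] [CompleteSpace Z]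

theorem Real.young_inequality_scaled {c d α ρ : ℝ} (hc : 0 ≤ c) (hd : 0 ≤ d) (hα : 0 < α)
    (hρ : 1 < ρ) :
    c * d ≤ α / ρ * d ^ ρ + α ^ (-(1 / (ρ - 1))) * ((ρ - 1) / ρ) * c ^ (ρ / (ρ - 1)) := by
  have hρ0 : 0 < ρ := one_pos.trans hρ
  have hρ1 : 0 < ρ - 1 := sub_pos.2 hρ
  have hconj : ρ.HolderConjugate (ρ / (ρ - 1)) := Real.HolderConjugate.conjExponent hρ
  -- Young's inequality for the pair `α^{1/ρ} d` and `α^{-1/ρ} c`.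
  have hyoung := Real.young_inequality_of_nonneg
    (mul_nonneg (Real.rpow_nonneg hα.le (1 / ρ)) hd)
    (mul_nonneg (Real.rpow_nonneg hα.le (-(1 / ρ))) hc) hconj
  have hprod : α ^ (1 / ρ) * d * (α ^ (-(1 / ρ)) * c) = c * d := by
    rw [mul_mul_mul_comm, ← Real.rpow_add hα, add_neg_cancel, Real.rpow_zero, one_mul, mul_comm]
  have hleft : (α ^ (1 / ρ) * d) ^ ρ = α * d ^ ρ := by
    rw [Real.mul_rpow (Real.rpow_nonneg hα.le _) hd, ← Real.rpow_mul hα.le,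
      one_div_mul_cancel hρ0.ne', Real.rpow_one]
  have hright : (α ^ (-(1 / ρ)) * c) ^ (ρ / (ρ - 1)) =
      α ^ (-(1 / (ρ - 1))) * c ^ (ρ / (ρ - 1)) := by
    rw [Real.mul_rpow (Real.rpow_nonneg hα.le _) hc, ← Real.rpow_mul hα.le]
    congr 2
    field_simp
  rw [hprod, hleft, hright] at hyoung
  calc c * d ≤ α * d ^ ρ / ρ + α ^ (-(1 / (ρ - 1))) * c ^ (ρ / (ρ - 1)) / (ρ / (ρ - 1)) := hyoung
    _ = _ := by field_simp

section

variable {E : Type*} [NormedAddCommGroup E] [InnerProductSpace ℝ E]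

theorem inner_le_add_norm_mul_infDist {S : Set E} {u y : E} {M : ℝ} (hS : S.Nonempty)
    (hM : ∀ w ∈ S, ⟪u, w⟫ ≤ M) : ⟪u, y⟫ ≤ M + ‖u‖ * Metric.infDist y S := by
  rcases (norm_nonneg u).eq_or_lt with hu | hu
  · obtain ⟨w, hw⟩ := hS
    have hu0 : u = 0 := norm_eq_zero.1 hu.symm
    simpa [hu0] using hM w hw
  · rw [← sub_le_iff_le_add', ← div_le_iff₀' hu, Metric.le_infDist hS]
    intro w hw
    rw [div_le_iff₀' hu, dist_eq_norm]
    have hcs := real_inner_le_norm u (y - w)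
    rw [inner_sub_right] at hcs
    linarith [hM w hw]

theorem coe_inner_le_suppFn {S : Set E} {u w : E} (hw : w ∈ S) :
    ((⟪u, w⟫ : ℝ) : EReal) ≤ suppFn u S :=
  le_iSup₂ (f := fun w (_ : w ∈ S) => ((⟪u, w⟫ : ℝ) : EReal)) w hw

theorem coe_inner_le_suppFn_add {S : Set E} (hS : S.Nonempty) (u y : E) :
    ((⟪u, y⟫ : ℝ) : EReal) ≤ suppFn u S + ((‖u‖ * Metric.infDist y S : ℝ) : EReal) := by
  by_cases htop : suppFn u S = ⊤
  · rw [htop, EReal.top_add_coe]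
    exact le_top
  obtain ⟨w, hw⟩ := hS
  have hbot : suppFn u S ≠ ⊥ := ne_bot_of_le_ne_bot (EReal.coe_ne_bot _) (coe_inner_le_suppFn hw)
  rw [← EReal.coe_toReal htop hbot, ← EReal.coe_add, EReal.coe_le_coe_iff]
  refine inner_le_add_norm_mul_infDist ⟨w, hw⟩ fun v hv => ?_
  exact EReal.coe_le_coe_iff.1 <| (EReal.coe_toReal htop hbot).symm ▸ coe_inner_le_suppFn hv

theorem IsMonotoneOp.inner_add_inner_nonpos {F : E → E} (hF : IsMonotoneOp F) (y z : E) :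
    ⟪F y, z - y⟫ + ⟪F z, y - z⟫ ≤ 0 := by
  have h := hF y z
  rw [← neg_sub y z, inner_neg_right, inner_sub_left] at *
  linarith

theorem ne_top_of_mem_zerFg {F : E → E} {g : E → EReal} (hg : ∃ v, g v < ⊤) {z : E}
    (hz : z ∈ zerFg F g) : g z ≠ ⊤ := by
  obtain ⟨v, hv⟩ := hg
  intro htop
  have h := hz v
  rw [htop, EReal.coe_add_top, top_le_iff] at h
  exact hv.ne h

theorem Hb_le_neg_of_weakSharp {F : E → E} {g : E → EReal} {α ρ : ℝ} (hF : IsMonotoneOp F)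
    (hg_ne_bot : ∀ v, g v ≠ ⊥) (hg_proper : ∃ v, g v < ⊤) (hws : WeakSharp F g (zerFg F g) α ρ) {z y : E}
    (hz : z ∈ zerFg F g) (hy : y ∈ edom g) :
    Hb F g z y ≤ ((-(α / ρ * Metric.infDist y (zerFg F g) ^ ρ) : ℝ) : EReal) := by
  obtain ⟨a, ha⟩ : ∃ a : ℝ, g z = a :=
    ⟨_, (EReal.coe_toReal (ne_top_of_mem_zerFg hg_proper hz) (hg_ne_bot z)).symm⟩
  obtain ⟨b, hb⟩ : ∃ b : ℝ, g y = b := ⟨_, (EReal.coe_toReal hy.ne (hg_ne_bot y)).symm⟩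
  have hsharp := hws z hz y hy
  simp only [Hb, ha, hb, ← EReal.coe_add, ← EReal.coe_sub, EReal.coe_le_coe_iff] at hsharp ⊢
  linarith [hF.inner_add_inner_nonpos y z]

end

theorem phi_minus_support_bound_general
    (F₂ : Z → Z) (g₂ : Z → EReal)
    (hF₂m : IsMonotoneOp F₂)
    (hg₂ : ProperConvexLsc g₂)
    (α ρ : ℝ) (hα : 0 < α) (hρ : 1 < ρ)
    (hws : WeakSharp F₂ g₂ (zerFg F₂ g₂) α ρ) :
    ∀ z ∈ zerFg F₂ g₂, ∀ p : Z, suppFn p (zerFg F₂ g₂) < ⊤ → ∀ σ : ℝ, 0 < σ →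
      phiFn F₂ g₂ z (σ • p) - suppFn (σ • p) (zerFg F₂ g₂) ≤
        ((α ^ (-(1 / (ρ - 1))) * ((ρ - 1) / ρ) * σ ^ (ρ / (ρ - 1)) *
          ‖p‖ ^ (ρ / (ρ - 1)) : ℝ) : EReal) := by
  intro z hz p _ σ hσ
  set S := zerFg F₂ g₂
  set s := suppFn (σ • p) S
  refine EReal.sub_le_of_le_add (iSup₂_le fun y hy => ?_)
  set d := Metric.infDist y S
  have hyoung := Real.young_inequality_scaled (mul_nonneg hσ.le (norm_nonneg p))
    Metric.infDist_nonneg hα hρ (d := d)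
  rw [Real.mul_rpow hσ.le (norm_nonneg p), ← mul_assoc] at hyoung
  calc Hb F₂ g₂ z y + ((⟪y, σ • p⟫ : ℝ) : EReal)
      ≤ ((-(α / ρ * d ^ ρ) : ℝ) : EReal) + (s + ((‖σ • p‖ * d : ℝ) : EReal)) := by
        rw [real_inner_comm]
        exact add_le_add (Hb_le_neg_of_weakSharp hF₂m hg₂.ne_bot hg₂.proper hws hz hy)
          (coe_inner_le_suppFn_add ⟨z, hz⟩ _ _)
    _ = s + ((σ * ‖p‖ * d - α / ρ * d ^ ρ : ℝ) : EReal) := by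
        rw [norm_smul, Real.norm_of_nonneg hσ.le, add_comm, add_assoc, ← EReal.coe_add,
          ← sub_eq_add_neg]
    _ ≤ _ := by
        rw [add_comm s]
        gcongr
        linarith

/-- under `(α,ρ)`-weak sharpness of `S₂` with `ρ > 1`, the regularized
Fitzpatrick-type gap is bounded by `α^{-1/(ρ-1)}·((ρ-1)/ρ)·σ^{ρ/(ρ-1)}·‖p*‖^{ρ/(ρ-1)}`. -/
theorem phi_minus_support_bound
    (F₂ : Z → Z) (LF₂ : ℝ) (g₂ : Z → EReal)
    (hF₂m : IsMonotoneOp F₂) (hF₂L : IsLipOp LF₂ F₂)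
    (hg₂ : ProperConvexLsc g₂)
    (hS₂ne : (zerFg F₂ g₂).Nonempty)
    (α ρ : ℝ) (hα : 0 < α) (hρ : 1 < ρ)
    (hws : WeakSharp F₂ g₂ (zerFg F₂ g₂) α ρ) :
    ∀ z ∈ zerFg F₂ g₂, ∀ p : Z, suppFn p (zerFg F₂ g₂) < ⊤ → ∀ σ : ℝ, 0 < σ →
      phiFn F₂ g₂ z (σ • p) - suppFn (σ • p) (zerFg F₂ g₂) ≤
        ((α ^ (-(1 / (ρ - 1))) * ((ρ - 1) / ρ) * σ ^ (ρ / (ρ - 1)) *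
          ‖p‖ ^ (ρ / (ρ - 1)) : ℝ) : EReal) :=
  phi_minus_support_bound_general F₂ g₂ hF₂m hg₂ α ρ hα hρ hws

end
end

section
/- Let (σ_k) be nonincreasing with σ_k > 0 and let t_k > 0 be arbitrary step sizes. Then for the optimistic extragradient iterates, for every z ∈ Z and every k ≥ 1: ½‖z^{k+1} − z‖² ≤ ½‖z^k − z‖² − ½‖z^{k+1/2} − z^k‖² + (t_k²/2)‖V_k(z^{k−1/2}) − V_k(z^{k+1/2})‖² + t_k⟨V_k(z^{k+1/2}), z − z^{k+1/2}⟩ + t_k(G_k(z) − G_k(z^{k+1/2})). -/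
noncomputable section

open scoped RealInnerProductSpace
open Filter Topology

variable {Z : Type*} [NormedAddCommGroup Z] [InnerProductSpace ℝ Z] [CompleteSpace Z]

/-!
Test the prox inequality of `z^{k+1}` at `z` and that of `z^{k+1/2}` at `z^{k+1}`, and add them:
the values of `G_k` at `z^{k+1}` cancel, and by polarization the two inner products add up to
the claimed right-hand side minus a square `½‖z^{k+1/2} - z^{k+1} + t_k (V_k(z^{k-1/2}) - V_k(z^{k+1/2}))‖²`.
-/

theorem EReal.coe_mul_sub_add_coe_mul_sub {t : ℝ} (ht : 0 < t) (g : EReal) (r s : ℝ) :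
    (t : EReal) * (g - r) + t * (r - s) = t * (g - s) := by
  induction g with
  | bot => simp [EReal.mul_bot_of_pos (EReal.coe_pos.2 ht)]
  | top =>
    rw [EReal.top_sub_coe, EReal.top_sub_coe, EReal.coe_mul_top_of_pos ht, ← EReal.coe_sub,
      ← EReal.coe_mul, EReal.top_add_coe]
  | coe g => norm_cast; ring

section

variable {E : Type*} [NormedAddCommGroup E] [InnerProductSpace ℝ E]

theorem IsProx.exists_eq_coe {τ : ℝ} (hτ : 0 < τ) {G : E → EReal} {u x : E}
    (h : IsProx τ G u x) : ∃ r : ℝ, G x = r := by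
  -- tested at `v = x`, the prox inequality fails when `G x = ±⊤`, as `⊤ - ⊤ = ⊥ - ⊥ = ⊥` in `EReal`
  have hx := h x
  rw [sub_self, inner_zero_right] at hx
  induction hG : G x with
  | bot => simp [hG, EReal.mul_bot_of_pos (EReal.coe_pos.2 hτ)] at hx
  | top => simp [hG, EReal.mul_bot_of_pos (EReal.coe_pos.2 hτ)] at hx
  | coe r => exact ⟨r, rfl⟩

theorem inner_optimistic_residuals_add (z x x' p a b : E) (t : ℝ) :
    ⟪(z - t • b) - x', p - x'⟫ + ⟪(z - t • a) - x, x' - x⟫ =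
      1 / 2 * ‖x' - p‖ ^ 2 - 1 / 2 * ‖z - p‖ ^ 2 + 1 / 2 * ‖x - z‖ ^ 2 - t * ⟪b, p - x⟫
        - t ^ 2 / 2 * ‖a - b‖ ^ 2 + 1 / 2 * ‖(x - x') + t • (a - b)‖ ^ 2 := by
  simp only [← real_inner_self_eq_norm_sq, inner_sub_left, inner_sub_right, inner_add_left,
    inner_add_right, real_inner_smul_left, real_inner_smul_right, real_inner_comm x']
  ring_nf
  simp only [real_inner_comm]
  ring

theorem IsProx.optimistic_step_estimate {t : ℝ} (ht : 0 < t) {G : E → EReal} {z x x' a b : E}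
    (hx : IsProx t G (z - t • a) x) (hx' : IsProx t G (z - t • b) x') (p : E) :
    ((1 / 2 * ‖x' - p‖ ^ 2 : ℝ) : EReal) ≤
      ((1 / 2 * ‖z - p‖ ^ 2 - 1 / 2 * ‖x - z‖ ^ 2 + t ^ 2 / 2 * ‖a - b‖ ^ 2
        + t * ⟪b, p - x⟫ : ℝ) : EReal) + (t : EReal) * (G p - G x) := by
  obtain ⟨r, hr⟩ := hx'.exists_eq_coe ht
  obtain ⟨s, hs⟩ := hx.exists_eq_coe ht
  have h₁ := hx' p
  have h₂ := hx x'
  rw [hr] at h₁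
  rw [hr, hs] at h₂
  have hreal : 1 / 2 * ‖x' - p‖ ^ 2 ≤ 1 / 2 * ‖z - p‖ ^ 2 - 1 / 2 * ‖x - z‖ ^ 2
      + t ^ 2 / 2 * ‖a - b‖ ^ 2 + t * ⟪b, p - x⟫
      + (⟪(z - t • b) - x', p - x'⟫ + ⟪(z - t • a) - x, x' - x⟫) := by
    rw [inner_optimistic_residuals_add]
    nlinarith [sq_nonneg ‖(x - x') + t • (a - b)‖]
  have hsum : ((⟪(z - t • b) - x', p - x'⟫ + ⟪(z - t • a) - x, x' - x⟫ : ℝ) : EReal) ≤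
      t * (G p - r) + t * (r - s) := by
    rw [EReal.coe_add]
    exact add_le_add h₁ h₂
  rw [hs, ← EReal.coe_mul_sub_add_coe_mul_sub ht _ r s]
  refine (EReal.coe_le_coe_iff.2 hreal).trans ?_
  rw [EReal.coe_add _ (_ + _)]
  gcongr

end

theorem optimistic_extragradient_basic_estimate_general
    (F₁ F₂ : Z → Z) (g₁ g₂ : Z → EReal)
    (σ t : ℕ → ℝ) (htpos : ∀ k, 0 < t k)
    (z w : ℕ → Z)
    (hw : ∀ k ≥ 1, IsProx (t k) (Gfun g₁ g₂ σ k)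
      (z k - t k • Vop F₁ F₂ σ k (w (k - 1))) (w k))
    (hz : ∀ k ≥ 1, IsProx (t k) (Gfun g₁ g₂ σ k)
      (z k - t k • Vop F₁ F₂ σ k (w k)) (z (k + 1))) :
    ∀ zz : Z, ∀ k ≥ 1,
      ((1 / 2 * ‖z (k + 1) - zz‖ ^ 2 : ℝ) : EReal) ≤
        ((1 / 2 * ‖z k - zz‖ ^ 2 - 1 / 2 * ‖w k - z k‖ ^ 2
          + t k ^ 2 / 2 * ‖Vop F₁ F₂ σ k (w (k - 1)) - Vop F₁ F₂ σ k (w k)‖ ^ 2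
          + t k * ⟪Vop F₁ F₂ σ k (w k), zz - w k⟫ : ℝ) : EReal)
        + (t k : EReal) * (Gfun g₁ g₂ σ k zz - Gfun g₁ g₂ σ k (w k)) :=
  fun zz k hk => (hw k hk).optimistic_step_estimate (htpos k) (hz k hk) zz

/-- per-iteration estimate (Lemma `lem:estimates`(i)) for the
optimistic extragradient iterates. -/
theorem optimistic_extragradient_basic_estimate
    (F₁ F₂ : Z → Z) (LF₁ LF₂ : ℝ) (g₁ g₂ : Z → EReal)
    (hF₁m : IsMonotoneOp F₁) (hF₂m : IsMonotoneOp F₂)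
    (hF₁L : IsLipOp LF₁ F₁) (hF₂L : IsLipOp LF₂ F₂)
    (hg₁ : ProperConvexLsc g₁) (hg₂ : ProperConvexLsc g₂)
    (hdom : (edom g₁ ∩ edom g₂).Nonempty)
    (σ t : ℕ → ℝ) (hσpos : ∀ k, 0 < σ k) (hσdec : Antitone σ) (htpos : ∀ k, 0 < t k)
    (z w : ℕ → Z) (hinit : w 0 = z 1)
    (hw : ∀ k ≥ 1, IsProx (t k) (Gfun g₁ g₂ σ k)
      (z k - t k • Vop F₁ F₂ σ k (w (k - 1))) (w k))
    (hz : ∀ k ≥ 1, IsProx (t k) (Gfun g₁ g₂ σ k)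
      (z k - t k • Vop F₁ F₂ σ k (w k)) (z (k + 1))) :
    ∀ zz : Z, ∀ k ≥ 1,
      ((1 / 2 * ‖z (k + 1) - zz‖ ^ 2 : ℝ) : EReal) ≤
        ((1 / 2 * ‖z k - zz‖ ^ 2 - 1 / 2 * ‖w k - z k‖ ^ 2
          + t k ^ 2 / 2 * ‖Vop F₁ F₂ σ k (w (k - 1)) - Vop F₁ F₂ σ k (w k)‖ ^ 2
          + t k * ⟪Vop F₁ F₂ σ k (w k), zz - w k⟫ : ℝ) : EReal)
        + (t k : EReal) * (Gfun g₁ g₂ σ k zz - Gfun g₁ g₂ σ k (w k)) :=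
  optimistic_extragradient_basic_estimate_general F₁ F₂ g₁ g₂ σ t htpos z w hw hz

end
end

section
/- Let (σ_k) be nonincreasing with σ_k > 0 and suppose the step sizes satisfy 8 t_k² L_k² ≤ 1 for all k ≥ 1. Then for the optimistic extragradient iterates, for every z ∈ Z and every k ≥ 2: ½‖z^{k+1} − z‖² + (t_k²/2)‖V_k(z^{k−1/2}) − V_k(z^{k+1/2})‖² ≤ ½‖z^k − z‖² + (t_{k−1}²/2)‖V_{k−1}(z^{k−3/2}) − V_{k−1}(z^{k−1/2})‖² − t_k(⟨V_k(z^{k+1/2}), z^{k+1/2} − z⟩ + G_k(z^{k+1/2}) − G_k(z)) − ¼‖z^{k+1/2} − z^k‖². -/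
noncomputable section

open scoped RealInnerProductSpace
open Filter Topology

variable {Z : Type*} [NormedAddCommGroup Z] [InnerProductSpace ℝ Z] [CompleteSpace Z]

/-!
Testing the two prox steps of iteration `k` against `zz` and against each other gives the
classical extragradient inequality, whose error term after Young's inequality is
`t_k² ‖V_k(z^{k-1/2}) - V_k(z^{k+1/2})‖² / 2`. Adding this quantity to both sides, the copy on the
right is, by Lipschitz continuity and `8 t_k² L_k² ≤ 1`, at most
`(‖z^{k-1/2} - z^k‖² + ‖z^{k+1/2} - z^k‖²) / 4`. The second summand is absorbed by the
`-‖z^{k+1/2} - z^k‖² / 2` of the extragradient inequality; for the first, `z^{k-1/2}` and `z^k`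
are the two prox points of iteration `k - 1`, so nonexpansiveness of the prox bounds
`‖z^{k-1/2} - z^k‖` by `t_{k-1} ‖V_{k-1}(z^{k-3/2}) - V_{k-1}(z^{k-1/2})‖`.
-/

section Prox

variable {E : Type*} [NormedAddCommGroup E] [InnerProductSpace ℝ E]
  {τ : ℝ} {G : E → EReal} {u x : E}

theorem IsProx.apply_ne_bot (hτ : 0 < τ) (h : IsProx τ G u x) (v : E) : G v ≠ ⊥ := by
  intro hv
  have := h v
  rw [hv, EReal.bot_sub, EReal.mul_bot_of_pos (mod_cast hτ)] at this
  exact EReal.coe_ne_bot _ (le_bot_iff.1 this)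

-- Testing `v = x` rules out `G x = ⊤`, since `⊤ - ⊤ = ⊥` in `EReal`.
theorem IsProx.apply_ne_top (hτ : 0 < τ) (h : IsProx τ G u x) : G x ≠ ⊤ := by
  intro hx
  have := h x
  rw [hx, EReal.sub_top, EReal.mul_bot_of_pos (mod_cast hτ)] at this
  exact EReal.coe_ne_bot _ (le_bot_iff.1 this)

theorem IsProx.inner_le (hτ : 0 < τ) (h : IsProx τ G u x) {v : E} (hv : G v ≠ ⊤) :
    ⟪u - x, v - x⟫ ≤ τ * ((G v).toReal - (G x).toReal) := by
  have := h v
  rw [← EReal.coe_toReal hv (h.apply_ne_bot hτ v),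
    ← EReal.coe_toReal (h.apply_ne_top hτ) (h.apply_ne_bot hτ x)] at this
  exact_mod_cast this

theorem IsProx.norm_sub_le {u₁ u₂ x₁ x₂ : E} (hτ : 0 < τ) (h₁ : IsProx τ G u₁ x₁)
    (h₂ : IsProx τ G u₂ x₂) : ‖x₁ - x₂‖ ≤ ‖u₁ - u₂‖ := by
  have i₁ := h₁.inner_le hτ (h₂.apply_ne_top hτ)
  have i₂ := h₂.inner_le hτ (h₁.apply_ne_top hτ)
  have key : ‖x₁ - x₂‖ ^ 2 ≤ ⟪u₁ - u₂, x₁ - x₂⟫ := by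
    have e : ⟪u₁ - x₁, x₂ - x₁⟫ + ⟪u₂ - x₂, x₁ - x₂⟫
        = ‖x₁ - x₂‖ ^ 2 - ⟪u₁ - u₂, x₁ - x₂⟫ := by
      rw [← real_inner_self_eq_norm_sq]
      simp only [inner_sub_left, inner_sub_right, real_inner_comm]
      ring
    linarith
  have cs := real_inner_le_norm (u₁ - u₂) (x₁ - x₂)
  nlinarith [norm_nonneg (x₁ - x₂), norm_nonneg (u₁ - u₂)]

theorem IsProx.extragradient_estimate {τ : ℝ} {G : E → EReal} {a b c p q v : E} (hτ : 0 < τ)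
    (hb : IsProx τ G (a - τ • q) b) (hc : IsProx τ G (a - τ • p) c) (hv : G v ≠ ⊤) :
    1 / 2 * ‖c - v‖ ^ 2 ≤ 1 / 2 * ‖a - v‖ ^ 2 - τ * (⟪p, b - v⟫ + (G b).toReal - (G v).toReal)
      - 1 / 2 * ‖b - a‖ ^ 2 + τ ^ 2 / 2 * ‖q - p‖ ^ 2 := by
  have hcv := hc.inner_le hτ hv
  have hbc := hb.inner_le hτ (hc.apply_ne_top hτ)
  have young : τ * ⟪q - p, c - b⟫ ≤ 1 / 2 * ‖c - b‖ ^ 2 + τ ^ 2 / 2 * ‖q - p‖ ^ 2 := by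
    have := norm_sub_sq_real (τ • (q - p)) (c - b)
    rw [norm_smul, real_inner_smul_left, Real.norm_eq_abs, mul_pow, sq_abs] at this
    nlinarith [norm_nonneg (τ • (q - p) - (c - b))]
  have polar : ∀ x y : E, 2 * ⟪x, y⟫ = ‖x‖ ^ 2 + ‖y‖ ^ 2 - ‖x - y‖ ^ 2 := fun x y => by
    rw [norm_sub_sq_real]; ring
  have e₁ := polar (a - c) (v - c)
  have e₂ := polar (a - b) (c - b)
  rw [show a - c - (v - c) = a - v by abel, norm_sub_rev v c] at e₁
  rw [show a - b - (c - b) = a - c by abel] at e₂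
  simp only [inner_sub_left, inner_sub_right, real_inner_smul_left, norm_sub_rev a b]
    at hcv hbc young e₁ e₂ ⊢
  linarith

end Prox

section Lipschitz

variable {E : Type*} [NormedAddCommGroup E]

theorem IsLipOp.add {L M : ℝ} {F G : E → E} (hF : IsLipOp L F) (hG : IsLipOp M G) :
    IsLipOp (L + M) (F + G) := fun x y => by
  calc ‖(F + G) x - (F + G) y‖ = ‖(F x - F y) + (G x - G y)‖ := by
        simp only [Pi.add_apply]; abel_nf
    _ ≤ ‖F x - F y‖ + ‖G x - G y‖ := norm_add_le _ _
    _ ≤ (L + M) * ‖x - y‖ := by linarith [hF x y, hG x y]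

theorem IsLipOp.const_smul [NormedSpace ℝ E] {L c : ℝ} {F : E → E} (hF : IsLipOp L F)
    (hc : 0 ≤ c) : IsLipOp (c * L) (c • F) := fun x y => by
  rw [Pi.smul_apply, Pi.smul_apply, ← smul_sub, norm_smul, Real.norm_of_nonneg hc, mul_assoc]
  exact mul_le_mul_of_nonneg_left (hF x y) hc

theorem IsLipOp.sq_mul_norm_sub_le {L τ : ℝ} {V : E → E} (hV : IsLipOp L V)
    (hstep : 8 * τ ^ 2 * L ^ 2 ≤ 1) (u a b : E) :
    τ ^ 2 * ‖V u - V b‖ ^ 2 ≤ 1 / 4 * ‖u - a‖ ^ 2 + 1 / 4 * ‖b - a‖ ^ 2 := by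
  have hlip : ‖V u - V b‖ ^ 2 ≤ L ^ 2 * ‖u - b‖ ^ 2 := by
    rw [← mul_pow]; exact pow_le_pow_left₀ (norm_nonneg _) (hV u b) 2
  have htri : ‖u - b‖ ≤ ‖u - a‖ + ‖b - a‖ := by
    simpa only [norm_sub_rev a b] using norm_sub_le_norm_sub_add_norm_sub u a b
  calc τ ^ 2 * ‖V u - V b‖ ^ 2 ≤ 8 * τ ^ 2 * L ^ 2 * ‖u - b‖ ^ 2 / 8 := by
        nlinarith [sq_nonneg τ]
    _ ≤ ‖u - b‖ ^ 2 / 8 := by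
        gcongr; exact mul_le_of_le_one_left (sq_nonneg _) hstep
    _ ≤ (‖u - a‖ + ‖b - a‖) ^ 2 / 8 := by gcongr
    _ ≤ 1 / 4 * ‖u - a‖ ^ 2 + 1 / 4 * ‖b - a‖ ^ 2 := by
        nlinarith [sq_nonneg (‖u - a‖ - ‖b - a‖)]

theorem isLipOp_Vop [InnerProductSpace ℝ E] {F₁ F₂ : E → E} {LF₁ LF₂ : ℝ} (hF₁ : IsLipOp LF₁ F₁)
    (hF₂ : IsLipOp LF₂ F₂) {σ : ℕ → ℝ} {k : ℕ} (hσ : 0 ≤ σ k) :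
    IsLipOp (LF₂ + σ k * LF₁) (Vop F₁ F₂ σ k) :=
  hF₂.add (hF₁.const_smul hσ)

end Lipschitz

theorem optimistic_extragradient_refined_estimate_general
    (F₁ F₂ : Z → Z) (LF₁ LF₂ : ℝ) (g₁ g₂ : Z → EReal)
    (hF₁L : IsLipOp LF₁ F₁) (hF₂L : IsLipOp LF₂ F₂)
    (σ t : ℕ → ℝ) (hσpos : ∀ k, 0 < σ k) (htpos : ∀ k, 0 < t k)
    (hstep : ∀ k ≥ 1, 8 * t k ^ 2 * (LF₂ + σ k * LF₁) ^ 2 ≤ 1)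
    (z w : ℕ → Z)
    (hw : ∀ k ≥ 1, IsProx (t k) (Gfun g₁ g₂ σ k)
      (z k - t k • Vop F₁ F₂ σ k (w (k - 1))) (w k))
    (hz : ∀ k ≥ 1, IsProx (t k) (Gfun g₁ g₂ σ k)
      (z k - t k • Vop F₁ F₂ σ k (w k)) (z (k + 1))) :
    ∀ zz : Z, ∀ k ≥ 2,
      ((1 / 2 * ‖z (k + 1) - zz‖ ^ 2
        + t k ^ 2 / 2 * ‖Vop F₁ F₂ σ k (w (k - 1)) - Vop F₁ F₂ σ k (w k)‖ ^ 2 : ℝ) : EReal) ≤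
      ((1 / 2 * ‖z k - zz‖ ^ 2
        + t (k - 1) ^ 2 / 2 *
          ‖Vop F₁ F₂ σ (k - 1) (w (k - 2)) - Vop F₁ F₂ σ (k - 1) (w (k - 1))‖ ^ 2 : ℝ) : EReal)
      - (t k : EReal) * (((⟪Vop F₁ F₂ σ k (w k), w k - zz⟫ : ℝ) : EReal)
          + Gfun g₁ g₂ σ k (w k) - Gfun g₁ g₂ σ k zz)
      - ((1 / 4 * ‖w k - z k‖ ^ 2 : ℝ) : EReal) := by
  intro zz k hk
  obtain ⟨m, rfl⟩ : ∃ m, k = m + 2 := ⟨k - 2, by omega⟩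
  have hτ := htpos (m + 2)
  have hb := hw (m + 2) le_add_self
  have hc := hz (m + 2) le_add_self
  have hprev := (hw (m + 1) le_add_self).norm_sub_le (htpos _) (hz (m + 1) le_add_self)
  rw [sub_sub_sub_cancel_left, ← smul_sub, norm_smul, Real.norm_of_nonneg (htpos _).le,
    norm_sub_rev (Vop F₁ F₂ σ (m + 1) _)] at hprev
  simp only [Nat.add_sub_cancel, show m + 2 - 1 = m + 1 from rfl, show m + 1 + 1 = m + 2 from rfl]
    at hb hprev ⊢
  by_cases hzz : Gfun g₁ g₂ σ (m + 2) zz = ⊤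
  · rw [hzz, EReal.sub_top, EReal.mul_bot_of_pos (mod_cast hτ), EReal.coe_sub_bot,
      EReal.top_sub_coe]
    exact le_top
  have hlip := (isLipOp_Vop hF₁L hF₂L (hσpos (m + 2)).le).sq_mul_norm_sub_le
    (hstep (m + 2) le_add_self) (w (m + 1)) (z (m + 2)) (w (m + 2))
  have hest := hb.extragradient_estimate hτ hc hzz
  rw [← EReal.coe_toReal (hb.apply_ne_top hτ) (hb.apply_ne_bot hτ _),
    ← EReal.coe_toReal hzz (hb.apply_ne_bot hτ zz)]
  norm_cast
  have hprev_sq := pow_le_pow_left₀ (norm_nonneg _) hprev 2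
  rw [mul_pow] at hprev_sq
  linarith [mul_nonneg (sq_nonneg (t (m + 1)))
    (sq_nonneg ‖Vop F₁ F₂ σ (m + 1) (w m) - Vop F₁ F₂ σ (m + 1) (w (m + 1))‖)]

/-- per-iteration estimate (Lemma `lem:estimates`(ii)) under the
step-size condition `8 t_k² L_k² ≤ 1`, for `k ≥ 2`. -/
theorem optimistic_extragradient_refined_estimate
    (F₁ F₂ : Z → Z) (LF₁ LF₂ : ℝ) (g₁ g₂ : Z → EReal)
    (hF₁m : IsMonotoneOp F₁) (hF₂m : IsMonotoneOp F₂)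
    (hF₁L : IsLipOp LF₁ F₁) (hF₂L : IsLipOp LF₂ F₂)
    (hg₁ : ProperConvexLsc g₁) (hg₂ : ProperConvexLsc g₂)
    (hdom : (edom g₁ ∩ edom g₂).Nonempty)
    (σ t : ℕ → ℝ) (hσpos : ∀ k, 0 < σ k) (hσdec : Antitone σ) (htpos : ∀ k, 0 < t k)
    (hstep : ∀ k ≥ 1, 8 * t k ^ 2 * (LF₂ + σ k * LF₁) ^ 2 ≤ 1)
    (z w : ℕ → Z) (hinit : w 0 = z 1)
    (hw : ∀ k ≥ 1, IsProx (t k) (Gfun g₁ g₂ σ k)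
      (z k - t k • Vop F₁ F₂ σ k (w (k - 1))) (w k))
    (hz : ∀ k ≥ 1, IsProx (t k) (Gfun g₁ g₂ σ k)
      (z k - t k • Vop F₁ F₂ σ k (w k)) (z (k + 1))) :
    ∀ zz : Z, ∀ k ≥ 2,
      ((1 / 2 * ‖z (k + 1) - zz‖ ^ 2
        + t k ^ 2 / 2 * ‖Vop F₁ F₂ σ k (w (k - 1)) - Vop F₁ F₂ σ k (w k)‖ ^ 2 : ℝ) : EReal) ≤
      ((1 / 2 * ‖z k - zz‖ ^ 2
        + t (k - 1) ^ 2 / 2 *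
          ‖Vop F₁ F₂ σ (k - 1) (w (k - 2)) - Vop F₁ F₂ σ (k - 1) (w (k - 1))‖ ^ 2 : ℝ) : EReal)
      - (t k : EReal) * (((⟪Vop F₁ F₂ σ k (w k), w k - zz⟫ : ℝ) : EReal)
          + Gfun g₁ g₂ σ k (w k) - Gfun g₁ g₂ σ k zz)
      - ((1 / 4 * ‖w k - z k‖ ^ 2 : ℝ) : EReal) :=
  optimistic_extragradient_refined_estimate_general F₁ F₂ LF₁ LF₂ g₁ g₂ hF₁L hF₂L σ t hσpos htpos
    hstep z w hw hz
end
end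

section
/- Let (σ_k) be nonincreasing with σ_k > 0 and suppose 8 t_k² L_k² ≤ 1 for all k ≥ 1. With D₁ := 0, the energy inequality E_{k+1}(z) + D_{k+1} ≤ E_k(z) + D_k − t_k Ψ_k(z) − ¼‖z^{k+1/2} − z^k‖² holds for the optimistic extragradient iterates, for all k ≥ 1 and all z ∈ Z (in particular also for k = 1, using z^{1/2} = z¹). -/
noncomputable section

open scoped RealInnerProductSpace
open Filter Topology

variable {Z : Type*} [NormedAddCommGroup Z] [InnerProductSpace ℝ Z] [CompleteSpace Z]

/-! Adding the prox inequalities defining `z^{k+1/2}` (tested at `z^{k+1}`) and `z^{k+1}`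
(tested at `z`) and expanding the inner products gives the energy inequality up to the error
`t_k ⟪V_k(z^{k-1/2}) - V_k(z^{k+1/2}), z^{k+1/2} - z^{k+1}⟫`. Young's inequality bounds it by
`D_{k+1} + ½‖z^{k+1/2} - z^{k+1}‖²`, and the Lipschitz bound with `8 t_k² L_k² ≤ 1` gives
`2 D_{k+1} ≤ ¼‖z^{k+1/2} - z^k‖² + ¼‖z^k - z^{k-1/2}‖²`; the last term is at most `D_k`
because the prox map is nonexpansive. -/

namespace IsProx

variable {E : Type*} [NormedAddCommGroup E] [InnerProductSpace ℝ E]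
  {τ : ℝ} {G : E → EReal} {u x : E}

/-- In `EReal`, `⊤ - ⊤ = ⊥ - ⊥ = ⊥`, so testing the prox inequality at `v = x` forces `G x`
to be finite. -/
theorem exists_eq_coe_s8 (hτ : 0 < τ) (hx : IsProx τ G u x) : ∃ b : ℝ, G x = b := by
  have h := hx x
  simp only [sub_self, inner_zero_right, EReal.coe_zero] at h
  induction hGx : G x using EReal.rec with
  | bot => simp [hGx, EReal.mul_bot_of_pos (EReal.coe_pos.2 hτ)] at h
  | coe b => exact ⟨b, rfl⟩
  | top => simp [hGx, EReal.mul_bot_of_pos (EReal.coe_pos.2 hτ)] at h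

theorem ne_bot (hτ : 0 < τ) (hx : IsProx τ G u x) (v : E) : G v ≠ ⊥ := by
  obtain ⟨b, hb⟩ := hx.exists_eq_coe_s8 hτ
  intro hv
  have h := hx v
  rw [hv, hb, EReal.bot_sub, EReal.mul_bot_of_pos (EReal.coe_pos.2 hτ)] at h
  exact EReal.coe_ne_bot _ (le_bot_iff.1 h)

theorem inner_le_s8 {v : E} {a b : ℝ} (hx : IsProx τ G u x) (hGx : G x = b) (hGv : G v = a) :
    ⟪u - x, v - x⟫ ≤ τ * (a - b) := by
  have h := hx v
  rw [hGv, hGx, ← EReal.coe_sub, ← EReal.coe_mul] at h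
  exact_mod_cast h

theorem norm_sub_le_s8 {u' x' : E} (hτ : 0 < τ) (hx : IsProx τ G u x) (hx' : IsProx τ G u' x') :
    ‖x - x'‖ ≤ ‖u - u'‖ := by
  obtain ⟨b, hb⟩ := hx.exists_eq_coe_s8 hτ
  obtain ⟨b', hb'⟩ := hx'.exists_eq_coe_s8 hτ
  have h := hx.inner_le_s8 hb hb'
  have h' := hx'.inner_le_s8 hb' hb
  have hfirm : ‖x - x'‖ ^ 2 ≤ ⟪u - u', x - x'⟫ := by
    rw [← real_inner_self_eq_norm_sq]
    simp only [inner_sub_left, inner_sub_right, real_inner_comm x x'] at h h' ⊢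
    linarith
  by_cases h0 : ‖x - x'‖ = 0
  · exact h0 ▸ norm_nonneg _
  · have := hfirm.trans (real_inner_le_norm _ _)
    rw [sq] at this
    exact le_of_mul_le_mul_right this ((norm_nonneg _).lt_of_ne' h0)

end IsProx

theorem sq_mul_norm_sub_le_of_isLipOp {E : Type*} [NormedAddCommGroup E] {τ L D : ℝ}
    {V : E → E} {x w u : E} (hV : IsLipOp L V) (hstep : 8 * τ ^ 2 * L ^ 2 ≤ 1) (hu : ‖x - u‖ ^ 2 ≤ 2 * D) :
    τ ^ 2 * ‖V u - V w‖ ^ 2 ≤ D + 1 / 4 * ‖w - x‖ ^ 2 := by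
  have hLip : ‖V u - V w‖ ^ 2 ≤ L ^ 2 * ‖w - u‖ ^ 2 := by
    rw [← mul_pow, norm_sub_rev]
    exact pow_le_pow_left₀ (norm_nonneg _) (hV w u) 2
  have hsplit : ‖w - u‖ ^ 2 ≤ 2 * ‖w - x‖ ^ 2 + 2 * ‖x - u‖ ^ 2 := by
    have := norm_sub_le_norm_sub_add_norm_sub w x u
    nlinarith [sq_nonneg (‖w - x‖ - ‖x - u‖), norm_nonneg (w - u)]
  nlinarith [mul_le_mul_of_nonneg_left hLip (sq_nonneg τ),
    mul_le_mul_of_nonneg_right hstep (sq_nonneg ‖w - u‖), sq_nonneg ‖x - u‖]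

section OptimisticStep

variable {E : Type*} [NormedAddCommGroup E] [InnerProductSpace ℝ E]

theorem IsLipOp.vop {F₁ F₂ : E → E} {L₁ L₂ : ℝ} {σ : ℕ → ℝ} {k : ℕ}
    (h₁ : IsLipOp L₁ F₁) (h₂ : IsLipOp L₂ F₂) (hσ : 0 ≤ σ k) :
    IsLipOp (L₂ + σ k * L₁) (Vop F₁ F₂ σ k) := by
  intro a b
  calc ‖Vop F₁ F₂ σ k a - Vop F₁ F₂ σ k b‖ = ‖(F₂ a - F₂ b) + σ k • (F₁ a - F₁ b)‖ := by
        rw [Vop, Vop, smul_sub]; abel_nf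
    _ ≤ ‖F₂ a - F₂ b‖ + σ k * ‖F₁ a - F₁ b‖ := by
        grw [norm_add_le, norm_smul, Real.norm_of_nonneg hσ]
    _ ≤ L₂ * ‖a - b‖ + σ k * (L₁ * ‖a - b‖) := by gcongr <;> apply_assumption
    _ = (L₂ + σ k * L₁) * ‖a - b‖ := by ring

theorem optimistic_step_of_prox_inequalities {τ Gw Gy Gz : ℝ} {x y w zz Vu Vw : E}
    (hw : ⟪x - τ • Vu - w, y - w⟫ ≤ τ * (Gy - Gw))
    (hy : ⟪x - τ • Vw - y, zz - y⟫ ≤ τ * (Gz - Gy)) :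
    1 / 2 * ‖y - zz‖ ^ 2 ≤ 1 / 2 * ‖x - zz‖ ^ 2 - τ * (⟪Vw, w - zz⟫ + Gw - Gz)
      - 1 / 2 * ‖w - x‖ ^ 2 + τ ^ 2 / 2 * ‖Vu - Vw‖ ^ 2 := by
  have young : τ * ⟪Vu - Vw, y - w⟫ ≤ τ ^ 2 / 2 * ‖Vu - Vw‖ ^ 2 + 1 / 2 * ‖y - w‖ ^ 2 := by
    have := real_inner_le_norm (τ • (Vu - Vw)) (y - w)
    rw [real_inner_smul_left, norm_smul, Real.norm_eq_abs] at this
    nlinarith [sq_nonneg (|τ| * ‖Vu - Vw‖ - ‖y - w‖), sq_abs τ]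
  simp only [← real_inner_self_eq_norm_sq, inner_sub_left, inner_sub_right, real_inner_smul_right,
    real_inner_comm] at *
  linarith

theorem IsProx.optimistic_energy_step {τ L D : ℝ} {G : E → EReal} {V : E → E}
    {x y w u zz : E} (hτ : 0 < τ) (hV : IsLipOp L V) (hstep : 8 * τ ^ 2 * L ^ 2 ≤ 1)
    (hu : ‖x - u‖ ^ 2 ≤ 2 * D) (hw : IsProx τ G (x - τ • V u) w)
    (hy : IsProx τ G (x - τ • V w) y) :
    ((1 / 2 * ‖y - zz‖ ^ 2 + τ ^ 2 / 2 * ‖V u - V w‖ ^ 2 : ℝ) : EReal) ≤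
      ((1 / 2 * ‖x - zz‖ ^ 2 + D : ℝ) : EReal)
      - (τ : EReal) * (((⟪V w, w - zz⟫ : ℝ) : EReal) + G w - G zz)
      - ((1 / 4 * ‖w - x‖ ^ 2 : ℝ) : EReal) := by
  obtain ⟨Gw, hGw⟩ := hw.exists_eq_coe_s8 hτ
  obtain ⟨Gy, hGy⟩ := hy.exists_eq_coe_s8 hτ
  rw [hGw]
  induction hGz : G zz using EReal.rec with
  | bot => exact absurd hGz (hy.ne_bot hτ zz)
  | top =>
    rw [← EReal.coe_add, EReal.sub_top, EReal.mul_bot_of_pos (EReal.coe_pos.2 hτ),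
      EReal.coe_sub_bot, EReal.top_sub_coe]
    exact le_top
  | coe Gz =>
    have hreal := optimistic_step_of_prox_inequalities (hw.inner_le_s8 hGw hGy) (hy.inner_le_s8 hGy hGz)
    have hcross := sq_mul_norm_sub_le_of_isLipOp (w := w) hV hstep hu
    rw [← EReal.coe_add, ← EReal.coe_sub, ← EReal.coe_mul, ← EReal.coe_sub, ← EReal.coe_sub]
    exact EReal.coe_le_coe_iff.2 (by linarith)

theorem optimistic_norm_sub_sq_le {V : ℕ → E → E} {G : ℕ → E → EReal} {t D : ℕ → ℝ}
    {z w : ℕ → E} (ht : ∀ k, 0 < t k) (hinit : w 0 = z 1)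
    (hw : ∀ k ≥ 1, IsProx (t k) (G k) (z k - t k • V k (w (k - 1))) (w k))
    (hz : ∀ k ≥ 1, IsProx (t k) (G k) (z k - t k • V k (w k)) (z (k + 1)))
    (hD1 : D 1 = 0) (hD : ∀ k ≥ 2, D k = t (k - 1) ^ 2 / 2 *
      ‖V (k - 1) (w (k - 2)) - V (k - 1) (w (k - 1))‖ ^ 2) :
    ∀ k ≥ 1, ‖z k - w (k - 1)‖ ^ 2 ≤ 2 * D k
  | 1, _ => by simp [hinit, hD1]
  | j + 2, _ => by
    have hprox := (hz (j + 1) (by omega)).norm_sub_le_s8 (ht _) (hw (j + 1) (by omega))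
    rw [sub_sub_sub_cancel_left, ← smul_sub, norm_smul, Real.norm_of_nonneg (ht _).le] at hprox
    have hDj : D (j + 2) = t (j + 1) ^ 2 / 2 * ‖V (j + 1) (w j) - V (j + 1) (w (j + 1))‖ ^ 2 :=
      hD (j + 2) (by omega)
    change ‖z (j + 2) - w (j + 1)‖ ≤ t (j + 1) * ‖V (j + 1) (w j) - V (j + 1) (w (j + 1))‖
      at hprox
    change ‖z (j + 2) - w (j + 1)‖ ^ 2 ≤ 2 * D (j + 2)
    rw [hDj]
    nlinarith [pow_le_pow_left₀ (norm_nonneg _) hprox 2]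

end OptimisticStep

theorem optimistic_extragradient_energy_inequality_general
    (F₁ F₂ : Z → Z) (LF₁ LF₂ : ℝ) (g₁ g₂ : Z → EReal)
    (hF₁L : IsLipOp LF₁ F₁) (hF₂L : IsLipOp LF₂ F₂)
    (σ t : ℕ → ℝ) (hσpos : ∀ k, 0 < σ k) (htpos : ∀ k, 0 < t k)
    (hstep : ∀ k ≥ 1, 8 * t k ^ 2 * (LF₂ + σ k * LF₁) ^ 2 ≤ 1)
    (z w : ℕ → Z) (hinit : w 0 = z 1)
    (hw : ∀ k ≥ 1, IsProx (t k) (Gfun g₁ g₂ σ k)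
      (z k - t k • Vop F₁ F₂ σ k (w (k - 1))) (w k))
    (hz : ∀ k ≥ 1, IsProx (t k) (Gfun g₁ g₂ σ k)
      (z k - t k • Vop F₁ F₂ σ k (w k)) (z (k + 1)))
    (D : ℕ → ℝ) (hD1 : D 1 = 0)
    (hD : ∀ k ≥ 2, D k = t (k - 1) ^ 2 / 2 *
      ‖Vop F₁ F₂ σ (k - 1) (w (k - 2)) - Vop F₁ F₂ σ (k - 1) (w (k - 1))‖ ^ 2) :
    ∀ zz : Z, ∀ k ≥ 1,
      ((1 / 2 * ‖z (k + 1) - zz‖ ^ 2 + D (k + 1) : ℝ) : EReal) ≤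
        ((1 / 2 * ‖z k - zz‖ ^ 2 + D k : ℝ) : EReal)
        - (t k : EReal) * (((⟪Vop F₁ F₂ σ k (w k), w k - zz⟫ : ℝ) : EReal)
            + Gfun g₁ g₂ σ k (w k) - Gfun g₁ g₂ σ k zz)
        - ((1 / 4 * ‖w k - z k‖ ^ 2 : ℝ) : EReal) := by
  intro zz k hk
  have hDsucc : D (k + 1) =
      t k ^ 2 / 2 * ‖Vop F₁ F₂ σ k (w (k - 1)) - Vop F₁ F₂ σ k (w k)‖ ^ 2 :=
    hD (k + 1) (by omega)
  rw [hDsucc]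
  exact (hw k hk).optimistic_energy_step (htpos k) (hF₁L.vop hF₂L (hσpos k).le) (hstep k hk)
    (optimistic_norm_sub_sq_le htpos hinit hw hz hD1 hD k hk) (hz k hk)

/-- the energy inequality
`E_{k+1}(z) + D_{k+1} ≤ E_k(z) + D_k − t_k Ψ_k(z) − ¼‖z^{k+1/2} − z^k‖²`
holds for all `k ≥ 1` (with `D₁ = 0`). -/
theorem optimistic_extragradient_energy_inequality
    (F₁ F₂ : Z → Z) (LF₁ LF₂ : ℝ) (g₁ g₂ : Z → EReal)
    (hF₁m : IsMonotoneOp F₁) (hF₂m : IsMonotoneOp F₂)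
    (hF₁L : IsLipOp LF₁ F₁) (hF₂L : IsLipOp LF₂ F₂)
    (hg₁ : ProperConvexLsc g₁) (hg₂ : ProperConvexLsc g₂)
    (hdom : (edom g₁ ∩ edom g₂).Nonempty)
    (σ t : ℕ → ℝ) (hσpos : ∀ k, 0 < σ k) (hσdec : Antitone σ) (htpos : ∀ k, 0 < t k)
    (hstep : ∀ k ≥ 1, 8 * t k ^ 2 * (LF₂ + σ k * LF₁) ^ 2 ≤ 1)
    (z w : ℕ → Z) (hinit : w 0 = z 1)
    (hw : ∀ k ≥ 1, IsProx (t k) (Gfun g₁ g₂ σ k)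
      (z k - t k • Vop F₁ F₂ σ k (w (k - 1))) (w k))
    (hz : ∀ k ≥ 1, IsProx (t k) (Gfun g₁ g₂ σ k)
      (z k - t k • Vop F₁ F₂ σ k (w k)) (z (k + 1)))
    (D : ℕ → ℝ) (hD1 : D 1 = 0)
    (hD : ∀ k ≥ 2, D k = t (k - 1) ^ 2 / 2 *
      ‖Vop F₁ F₂ σ (k - 1) (w (k - 2)) - Vop F₁ F₂ σ (k - 1) (w (k - 1))‖ ^ 2) :
    ∀ zz : Z, ∀ k ≥ 1,
      ((1 / 2 * ‖z (k + 1) - zz‖ ^ 2 + D (k + 1) : ℝ) : EReal) ≤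
        ((1 / 2 * ‖z k - zz‖ ^ 2 + D k : ℝ) : EReal)
        - (t k : EReal) * (((⟪Vop F₁ F₂ σ k (w k), w k - zz⟫ : ℝ) : EReal)
            + Gfun g₁ g₂ σ k (w k) - Gfun g₁ g₂ σ k zz)
        - ((1 / 4 * ‖w k - z k‖ ^ 2 : ℝ) : EReal) :=
  optimistic_extragradient_energy_inequality_general F₁ F₂ LF₁ LF₂ g₁ g₂ hF₁L hF₂L σ t hσpos htpos
    hstep z w hinit hw hz D hD1 hD

end
end
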